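/- For each $d \ge 2$, the bipartite graph with independent set $A$ of size $d$ and independent set $B$ containing, for each subset $S \subseteq A$ with $|S| \ge 2$, a vertex $b_S$ adjacent exactly to the vertices of $S$, has VC-dimension exactly $d$ and $A$ is an identifying code of it. -/

import Mathlib

/-- The bipartite graph with independent set `A = Fin d` and an independent set `B`
containing, for each `S ⊆ A` with `|S| ≥ 2`, a vertex adjacent exactly to the
vertices of `S`. -/
def subsetGraph (d : ℕ) : SimpleGraph (Fin d ⊕ {S : Finset (Fin d) // 2 ≤ S.card}) where
  Adj x y :=
    match x, y with
    | Sum.inl a, Sum.inr S => a ∈ S.val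
    | Sum.inr S, Sum.inl a => a ∈ S.val
    | _, _ => False
  symm := ⟨by rintro (a | S) (b | T) h <;> first | exact h.elim | exact h⟩
  loopless := ⟨by rintro (a | S) h <;> exact h⟩

/-- The same graph with an additional isolated vertex (realizing the empty trace). -/
def subsetGraph' (d : ℕ) :
    SimpleGraph ((Fin d ⊕ {S : Finset (Fin d) // 2 ≤ S.card}) ⊕ Unit) where
  Adj x y :=
    match x, y with
    | Sum.inl a, Sum.inl b => (subsetGraph d).Adj a b
    | _, _ => False
  symm := ⟨by
    rintro (a | u) (b | v) h
    · exact (subsetGraph d).adj_symm h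
    · exact h.elim
    · exact h.elim
    · exact h.elim⟩
  loopless := ⟨by
    rintro (a | u) h
    · exact (subsetGraph d).loopless.irrefl _ h
    · exact h⟩

/-!
The trace of a closed neighbourhood on `A` is `{a}` for `a ∈ A`, `S` for `b_S`, and `∅` for the
isolated vertex. This trace map is a bijection from the vertices of `subsetGraph' d` onto the
subsets of `A`: hence `A` is shattered, `A` is an identifying code of `subsetGraph d`, and the
graph has exactly `2 ^ d` vertices, so that no set of more than `d` vertices can be shattered.
-/

open Finset Function

theorem two_pow_card_le_of_forall_subset_exists_eq {α V : Type*} [Fintype V] (t : V → Set α)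
    (X : Finset α) (h : ∀ S ⊆ (X : Set α), ∃ w, t w = S) : 2 ^ #X ≤ Fintype.card V := by
  have hT (T : X.powerset) : ∃ w, t w = ((T : Finset α) : Set α) :=
    h _ (by exact_mod_cast mem_powerset.mp T.2)
  choose g hg using hT
  have hg_inj : Injective g := fun T₁ T₂ h₁₂ =>
    Subtype.ext (by exact_mod_cast (hg T₁).symm.trans (h₁₂ ▸ hg T₂))
  simpa [Fintype.card_coe, card_powerset] using Fintype.card_le_of_injective g hg_inj

namespace SubsetGraph

variable {d : ℕ}

def traceOnA : Fin d ⊕ {S : Finset (Fin d) // 2 ≤ S.card} → Finset (Fin d) :=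
  Sum.elim (fun a => {a}) Subtype.val

def traceOnA' : (Fin d ⊕ {S : Finset (Fin d) // 2 ≤ S.card}) ⊕ Unit → Finset (Fin d) :=
  Sum.elim traceOnA fun _ => ∅

theorem traceOnA_nonempty (v : Fin d ⊕ {S : Finset (Fin d) // 2 ≤ S.card}) :
    (traceOnA v).Nonempty := by
  rcases v with a | S
  · exact singleton_nonempty a
  · exact card_pos.mp (zero_lt_two.trans_le S.2)

theorem traceOnA_injective : Injective (traceOnA (d := d)) := by
  have singleton_ne (a : Fin d) (S : {S : Finset (Fin d) // 2 ≤ S.card}) : {a} ≠ S.val :=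
    fun h => by simpa [← h] using S.2
  rintro (a | S) (b | T) h
  · exact congrArg Sum.inl (singleton_injective h)
  · exact (singleton_ne a T h).elim
  · exact (singleton_ne b S h.symm).elim
  · exact congrArg Sum.inr (Subtype.ext h)

theorem exists_traceOnA_eq {s : Finset (Fin d)} (hs : s.Nonempty) : ∃ v, traceOnA v = s := by
  by_cases h₁ : #s = 1
  · obtain ⟨a, rfl⟩ := card_eq_one.mp h₁
    exact ⟨Sum.inl a, rfl⟩
  · have h₂ : 2 ≤ #s := by have := hs.card_pos; omega
    exact ⟨Sum.inr ⟨s, h₂⟩, rfl⟩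

theorem traceOnA'_bijective : Bijective (traceOnA' (d := d)) := by
  refine ⟨?_, fun s => ?_⟩
  · rintro (v | ⟨⟩) (w | ⟨⟩) h
    · exact congrArg Sum.inl (traceOnA_injective h)
    · exact ((traceOnA_nonempty v).ne_empty h).elim
    · exact ((traceOnA_nonempty w).ne_empty h.symm).elim
    · rfl
  · obtain rfl | hs := s.eq_empty_or_nonempty
    · exact ⟨Sum.inr (), rfl⟩
    · obtain ⟨v, hv⟩ := exists_traceOnA_eq hs
      exact ⟨Sum.inl v, hv⟩

theorem card_vertices_subsetGraph' :
    Fintype.card ((Fin d ⊕ {S : Finset (Fin d) // 2 ≤ S.card}) ⊕ Unit) = 2 ^ d := by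
  simp [Fintype.card_of_bijective traceOnA'_bijective]

theorem setOf_closedNbhd_eq_traceOnA (v : Fin d ⊕ {S : Finset (Fin d) // 2 ≤ S.card}) :
    {a : Fin d | Sum.inl a = v ∨ (subsetGraph d).Adj v (Sum.inl a)} = traceOnA v := by
  ext a
  rcases v with b | S <;> simp [traceOnA, subsetGraph]

theorem preimage_closedNbhd_eq_traceOnA' (w : (Fin d ⊕ {S : Finset (Fin d) // 2 ≤ S.card}) ⊕ Unit) :
    (fun a : Fin d => Sum.inl (Sum.inl a)) ⁻¹' {x | x = w ∨ (subsetGraph' d).Adj w x} =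
      traceOnA' w := by
  rcases w with v | ⟨⟩
  · rw [traceOnA', Sum.elim_inl, ← setOf_closedNbhd_eq_traceOnA]
    ext a
    simp only [Set.mem_preimage, Set.mem_ofPred_eq, Sum.inl.injEq]
    rfl
  · ext a
    simp [traceOnA', subsetGraph']

end SubsetGraph

open SubsetGraph

theorem stmt8_general (d : ℕ) :
    -- A is an identifying code of `subsetGraph d`
    ((∀ v : Fin d ⊕ {S : Finset (Fin d) // 2 ≤ S.card},
        ∃ a : Fin d, Sum.inl a = v ∨ (subsetGraph d).Adj v (Sum.inl a)) ∧
      (∀ u v : Fin d ⊕ {S : Finset (Fin d) // 2 ≤ S.card},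
        {a : Fin d | Sum.inl a = u ∨ (subsetGraph d).Adj u (Sum.inl a)} =
          {a : Fin d | Sum.inl a = v ∨ (subsetGraph d).Adj v (Sum.inl a)} → u = v)) ∧
    -- the copy of A is shattered in `subsetGraph' d`, a set of size d
    (∃ X : Finset ((Fin d ⊕ {S : Finset (Fin d) // 2 ≤ S.card}) ⊕ Unit),
      X.card = d ∧
      (∀ S ⊆ (X : Set _), ∃ w,
        {x ∈ (X : Set _) | x = w ∨ (subsetGraph' d).Adj w x} = S)) ∧
    -- and every shattered set of `subsetGraph' d` has size at most d
    (∀ X : Finset ((Fin d ⊕ {S : Finset (Fin d) // 2 ≤ S.card}) ⊕ Unit),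
      (∀ S ⊆ (X : Set _), ∃ w,
        {x ∈ (X : Set _) | x = w ∨ (subsetGraph' d).Adj w x} = S) → X.card ≤ d) := by
  classical
  refine ⟨⟨fun v => ?_, fun u v huv => ?_⟩, ?_, fun X hX => ?_⟩
  · obtain ⟨a, ha⟩ := traceOnA_nonempty v
    exact ⟨a, (Set.ext_iff.mp (setOf_closedNbhd_eq_traceOnA v) a).mpr ha⟩
  · simp only [setOf_closedNbhd_eq_traceOnA, coe_inj] at huv
    exact traceOnA_injective huv
  · let ι : Fin d ↪ (Fin d ⊕ {S : Finset (Fin d) // 2 ≤ S.card}) ⊕ Unit :=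
      Embedding.inl.trans Embedding.inl
    refine ⟨univ.map ι, by simp, fun S hS => ?_⟩
    obtain ⟨w, hw⟩ := traceOnA'_bijective.2 (ι ⁻¹' S).toFinset
    refine ⟨w, ?_⟩
    rw [coe_map, coe_univ, Set.image_univ] at hS ⊢
    change Set.range ι ∩ {x | x = w ∨ (subsetGraph' d).Adj w x} = S
    rw [← Set.image_preimage_eq_range_inter, ← Set.image_preimage_eq_of_subset hS]
    congr 1
    exact (preimage_closedNbhd_eq_traceOnA' w).trans (by simp [hw])
  · have := two_pow_card_le_of_forall_subset_exists_eq _ X hX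
    rw [card_vertices_subsetGraph'] at this
    exact (Nat.pow_le_pow_iff_right one_lt_two).mp this

/-- For `d ≥ 2`: the side `A` is an identifying code of the subset graph, and the graph
(with an added isolated vertex realizing the empty trace) has VC-dimension exactly `d`:
`A` is a shattered set of size `d` and every shattered set has size at most `d`. -/
theorem stmt8 (d : ℕ) (hd : 2 ≤ d) :
    -- A is an identifying code of `subsetGraph d`
    ((∀ v : Fin d ⊕ {S : Finset (Fin d) // 2 ≤ S.card},
        ∃ a : Fin d, Sum.inl a = v ∨ (subsetGraph d).Adj v (Sum.inl a)) ∧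
      (∀ u v : Fin d ⊕ {S : Finset (Fin d) // 2 ≤ S.card},
        {a : Fin d | Sum.inl a = u ∨ (subsetGraph d).Adj u (Sum.inl a)} =
          {a : Fin d | Sum.inl a = v ∨ (subsetGraph d).Adj v (Sum.inl a)} → u = v)) ∧
    -- the copy of A is shattered in `subsetGraph' d`, a set of size d
    (∃ X : Finset ((Fin d ⊕ {S : Finset (Fin d) // 2 ≤ S.card}) ⊕ Unit),
      X.card = d ∧
      (∀ S ⊆ (X : Set _), ∃ w,
        {x ∈ (X : Set _) | x = w ∨ (subsetGraph' d).Adj w x} = S)) ∧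
    -- and every shattered set of `subsetGraph' d` has size at most d
    (∀ X : Finset ((Fin d ⊕ {S : Finset (Fin d) // 2 ≤ S.card}) ⊕ Unit),
      (∀ S ⊆ (X : Set _), ∃ w,
        {x ∈ (X : Set _) | x = w ∨ (subsetGraph' d).Adj w x} = S) → X.card ≤ d) :=
  stmt8_general d
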